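/- arXiv:1909.02421 — 5 statements merged into one kernel-verified Lean document; each statement's English description precedes it below -/
import Mathlib

section
/- Consider the 2-swap game with 10 strategic agents (5 red, 5 blue) whose topology is the tree with a root node α, three children β₁, β₂, β₃ of α, and two leaf children of each βᵢ (10 nodes total). This game admits no equilibrium assignment: for every bijective assignment of the 10 agents to the 10 nodes there exist a red agent and a blue agent who can both strictly increase their utility by swapping positions. -/
/-!
An agent on a leaf whose colour differs from that of its parent `β` has utility 0, and an
agent of `β`'s colour moving onto that leaf gets utility 1. Hence such a leaf yields an
improving swap with any agent `w ≠ β` of `β`'s colour having a neighbour of the leaf's colour: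
the leaf agent gains a friend next to `w`, and `w` had an unfriendly neighbour. If no such `w`
existed, the colour of `β` would spread from every node other than `β` to all its neighbours,
and one colour would occupy at least 8 nodes. If instead every leaf agrees with its parent, each
branch `{βᵢ, leaves}` is monochromatic, so every colour class has size `≡ 0, 1 (mod 3)`, which
rules out 5.
-/

open Finset

namespace SwapGame

/-- Build a simple graph from a (not necessarily symmetric) boolean relation
by symmetrizing it and removing loops. -/
def mkGraph {V : Type*} (r : V → V → Bool) : SimpleGraph V where
  Adj a b := a ≠ b ∧ (r a b ∨ r b a)
  symm := ⟨fun a b h => ⟨Ne.symm h.1, Or.symm h.2⟩⟩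
  loopless := ⟨fun a h => h.1 rfl⟩

instance mkGraph.instDecidableRel {V : Type*} [DecidableEq V] (r : V → V → Bool) :
    DecidableRel (mkGraph r).Adj :=
  fun a b => inferInstanceAs (Decidable (a ≠ b ∧ (r a b ∨ r b a)))

variable {A V K : Type*} [Fintype V] [DecidableEq A] [DecidableEq V] [DecidableEq K]

/-- The assignment obtained from `σ` by swapping the locations of agents `i` and `j`. -/
def swapA (σ : A ≃ V) (i j : A) : A ≃ V := (Equiv.swap i j).trans σ

/-- The utility of agent `i` under assignment `σ`: the fraction of the neighbors of the
node of `i` that are occupied by agents of the same type (friends of `i`). -/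
def util (G : SimpleGraph V) [DecidableRel G.Adj] (c : A → K) (σ : A ≃ V) (i : A) : ℚ :=
  (((G.neighborFinset (σ i)).filter (fun w => c (σ.symm w) = c i)).card : ℚ) /
    ((G.neighborFinset (σ i)).card : ℚ)

/-- Agents `i` and `j` both strictly increase their utility by swapping their locations. -/
def improving (G : SimpleGraph V) [DecidableRel G.Adj] (c : A → K) (σ : A ≃ V)
    (i j : A) : Prop :=
  util G c σ i < util G c (swapA σ i j) i ∧ util G c σ j < util G c (swapA σ i j) j

/-- An assignment is an equilibrium if no pair of agents can both strictly increase
their utility by swapping positions. -/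
def isEquilibrium (G : SimpleGraph V) [DecidableRel G.Adj] (c : A → K) (σ : A ≃ V) : Prop :=
  ¬ ∃ i j : A, improving G c σ i j

/-- The social welfare of an assignment: the sum of the utilities of all agents. -/
def SW [Fintype A] (G : SimpleGraph V) [DecidableRel G.Adj] (c : A → K) (σ : A ≃ V) : ℚ :=
  ∑ i : A, util G c σ i

/-- Agent `i` is exposed: at least one neighbor is occupied by an agent of another type. -/
def exposed (G : SimpleGraph V) [DecidableRel G.Adj] (c : A → K) (σ : A ≃ V) (i : A) : Prop :=
  ((G.neighborFinset (σ i)).filter (fun w => c (σ.symm w) ≠ c i)).Nonempty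

instance exposed.instDecidable (G : SimpleGraph V) [DecidableRel G.Adj] (c : A → K)
    (σ : A ≃ V) : DecidablePred (exposed G c σ) :=
  fun _ => inferInstanceAs (Decidable (Finset.Nonempty _))

/-- The degree of integration of an assignment: the number of exposed agents. -/
def DI [Fintype A] (G : SimpleGraph V) [DecidableRel G.Adj] (c : A → K) (σ : A ≃ V) : ℕ :=
  (univ.filter (fun i : A => exposed G c σ i)).card

end SwapGame

namespace SwapGame

/-- The 10-node tree: a root `α`, three children `β₁,β₂,β₃`, and two leaf children
of each `βᵢ`. -/
inductive V10 where
  | root : V10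
  | mid : Fin 3 → V10
  | leaf : Fin 3 → Fin 2 → V10
  deriving DecidableEq, Fintype

def adj10 : V10 → V10 → Bool
  | .root, .mid _ => true
  | .mid i, .leaf j _ => i == j
  | _, _ => false

abbrev G10 : SimpleGraph V10 := mkGraph adj10

/-- Agents: 5 red (`.1 = 0`) and 5 blue (`.1 = 1`) strategic agents. -/
abbrev A10 := Fin 2 × Fin 5

theorem swapA_comm {A V : Type*} [DecidableEq A] (σ : A ≃ V) (i j : A) :
    swapA σ i j = swapA σ j i := by
  rw [swapA, swapA, Equiv.swap_comm]

section General

variable {A V K : Type*} [Fintype V] [DecidableEq K] (G : SimpleGraph V) [DecidableRel G.Adj]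

def colorFrac (χ : V → K) (v : V) (k : K) : ℚ :=
  (#{w ∈ G.neighborFinset v | χ w = k} : ℚ) / #(G.neighborFinset v)

variable {G} {χ : V → K} {v : V} {k : K}

theorem colorFrac_eq_zero (h : ∀ w, G.Adj v w → χ w ≠ k) : colorFrac G χ v k = 0 := by
  rw [colorFrac, filter_false_of_mem fun w hw => h w ((G.mem_neighborFinset v w).1 hw)]
  simp

theorem colorFrac_eq_one (hv : ∃ w, G.Adj v w) (h : ∀ w, G.Adj v w → χ w = k) :
    colorFrac G χ v k = 1 := by
  obtain ⟨w, hw⟩ := hv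
  have hne : (#(G.neighborFinset v) : ℚ) ≠ 0 := by
    exact_mod_cast (card_pos.2 ⟨w, (G.mem_neighborFinset v w).2 hw⟩).ne'
  rw [colorFrac, filter_true_of_mem fun w hw => h w ((G.mem_neighborFinset v w).1 hw),
    div_self hne]

theorem colorFrac_pos (h : ∃ w, G.Adj v w ∧ χ w = k) : 0 < colorFrac G χ v k := by
  obtain ⟨w, hw, hwk⟩ := h
  have hmem : w ∈ G.neighborFinset v := (G.mem_neighborFinset v w).2 hw
  apply div_pos <;> norm_cast <;> apply card_pos.2
  exacts [⟨w, mem_filter.2 ⟨hmem, hwk⟩⟩, ⟨w, hmem⟩]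

theorem colorFrac_lt_one (h : ∃ w, G.Adj v w ∧ χ w ≠ k) : colorFrac G χ v k < 1 := by
  obtain ⟨w, hw, hwk⟩ := h
  have hmem : w ∈ G.neighborFinset v := (G.mem_neighborFinset v w).2 hw
  have hlt : #{w ∈ G.neighborFinset v | χ w = k} < #(G.neighborFinset v) :=
    card_lt_card (filter_ssubset.2 ⟨w, hmem, hwk⟩)
  rw [colorFrac, div_lt_one (by exact_mod_cast (Nat.zero_le _).trans_lt hlt)]
  exact_mod_cast hlt

variable {c : A → K} {σ : A ≃ V} {i j : A}

theorem util_eq_colorFrac : util G c σ i = colorFrac G (fun v => c (σ.symm v)) (σ i) (c i) :=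
  rfl

theorem card_filter_color_eq [Fintype A] (c : A → K) (σ : A ≃ V) (k : K) :
    #{v | c (σ.symm v) = k} = #{i | c i = k} :=
  card_equiv σ.symm (by simp)

variable [DecidableEq A]

theorem improving_comm : improving G c σ i j ↔ improving G c σ j i := by
  rw [improving, improving, swapA_comm, and_comm]

/-- Swapping agents on non-adjacent nodes leaves the neighbourhoods of both nodes intact. -/
theorem util_swapA_of_not_adj (hij : ¬G.Adj (σ i) (σ j)) :
    util G c (swapA σ i j) i = colorFrac G (fun v => c (σ.symm v)) (σ j) (c i) := by
  have hτ : swapA σ i j i = σ j := by simp [swapA]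
  rw [util, colorFrac, hτ]
  congr 3
  refine filter_congr fun w hw => ?_
  have hw : G.Adj (σ j) w := (G.mem_neighborFinset _ w).1 hw
  have hwi : σ.symm w ≠ i := fun h => hij (by rw [← h, σ.apply_symm_apply]; exact hw.symm)
  have hwj : σ.symm w ≠ j := fun h => hw.ne (by rw [← h, σ.apply_symm_apply])
  simp [swapA, Equiv.swap_apply_of_ne_of_ne hwi hwj]

theorem improving_of_surrounded (hc : c i ≠ c j) (hij : ¬G.Adj (σ i) (σ j))
    (hi : ∃ w, G.Adj (σ i) w) (hnbr : ∀ w, G.Adj (σ i) w → c (σ.symm w) = c j)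
    (hj : ∃ w, G.Adj (σ j) w ∧ c (σ.symm w) = c i) : improving G c σ i j := by
  refine ⟨?_, ?_⟩
  · rw [util_swapA_of_not_adj hij, util_eq_colorFrac,
      colorFrac_eq_zero fun w hw => (hnbr w hw).trans_ne hc.symm]
    exact colorFrac_pos hj
  · rw [swapA_comm, util_swapA_of_not_adj fun h => hij h.symm, util_eq_colorFrac,
      colorFrac_eq_one hi hnbr]
    obtain ⟨w, hw, hwc⟩ := hj
    exact colorFrac_lt_one ⟨w, hw, hwc.trans_ne hc⟩

end General

namespace V10

theorem adj_leaf_iff {b : Fin 3} {t : Fin 2} {v : V10} : G10.Adj (leaf b t) v ↔ v = mid b := by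
  cases v <;> simp [mkGraph, adj10]

theorem adj_root_mid (b : Fin 3) : G10.Adj root (mid b) := by simp [mkGraph, adj10]

theorem adj_mid_leaf (b : Fin 3) (t : Fin 2) : G10.Adj (mid b) (leaf b t) := by
  simp [mkGraph, adj10]

theorem card_filter_eq (p : V10 → Prop) [DecidablePred p] :
    #{v | p v} = (if p root then 1 else 0) +
      ∑ b, ((if p (mid b) then 1 else 0) + ∑ t, if p (leaf b t) then 1 else 0) := by
  have huniv : (univ : Finset V10) = {root, mid 0, mid 1, mid 2, leaf 0 0, leaf 0 1, leaf 1 0,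
      leaf 1 1, leaf 2 0, leaf 2 1} := by decide
  rw [card_filter, huniv]
  simp [Fin.sum_univ_three, Fin.sum_univ_two, -sum_boole]
  ring

theorem card_filter_mod_three_ne_two (p : V10 → Prop) [DecidablePred p]
    (h : ∀ b t, p (leaf b t) ↔ p (mid b)) : #{v | p v} % 3 ≠ 2 := by
  have hbranch : ∀ b, ((if p (mid b) then 1 else 0) + ∑ t, if p (leaf b t) then 1 else 0) =
      3 * if p (mid b) then 1 else 0 := by
    intro b
    simp only [h, Fin.sum_univ_two]
    split_ifs <;> rfl
  rw [card_filter_eq, sum_congr rfl fun b _ => hbranch b, ← mul_sum]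
  split_ifs <;> omega

theorem eight_le_card_filter (p : V10 → Prop) [DecidablePred p] {b : Fin 3} (hroot : p root)
    (hb : p (mid b) ∨ ∃ t, p (leaf b t)) (hmid : ∀ b' ≠ b, p (mid b'))
    (hleaf : ∀ b' ≠ b, ∀ t, p (leaf b' t)) : 8 ≤ #{v | p v} := by
  have hother : ∀ b' ∈ univ.erase b,
      ((if p (mid b') then 1 else 0) + ∑ t, if p (leaf b' t) then 1 else 0) = 3 := by
    intro b' hb'
    have hb' := ne_of_mem_erase hb'
    simp [hmid b' hb', hleaf b' hb']
  have hbranch : 1 ≤ (if p (mid b) then 1 else 0) + ∑ t, if p (leaf b t) then 1 else 0 := by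
    rcases hb with hb | ⟨t, ht⟩
    · simp [hb]
    · calc 1 = if p (leaf b t) then 1 else 0 := by simp [ht]
        _ ≤ ∑ t', if p (leaf b t') then 1 else 0 :=
          single_le_sum (f := fun t' => if p (leaf b t') then 1 else 0)
            (fun _ _ => Nat.zero_le _) (mem_univ t)
        _ ≤ _ := le_add_left le_rfl
  rw [card_filter_eq, ← add_sum_erase _ _ (mem_univ b), sum_congr rfl hother, sum_const,
    card_erase_of_mem (mem_univ b)]
  simp only [hroot, if_true, card_univ, Fintype.card_fin, smul_eq_mul]
  omega

theorem exists_adj_of_leaf_ne_mid (χ : V10 → Fin 2) (hcount : ∀ k, #{v | χ v = k} = 5)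
    {b : Fin 3} {t : Fin 2} (h : χ (leaf b t) ≠ χ (mid b)) :
    ∃ w ≠ mid b, χ w = χ (mid b) ∧ ∃ x, G10.Adj w x ∧ χ x = χ (leaf b t) := by
  set k := χ (leaf b t)
  set k' := χ (mid b)
  have hk : ∀ v, χ v ≠ k' → χ v = k := fun v hv => by omega
  by_contra! H
  have spread : ∀ w ≠ mid b, χ w = k' → ∀ x, G10.Adj w x → χ x = k' :=
    fun w hw hwk x hx => by_contra fun hxk => H w hw hwk x hx (hk x hxk)
  by_cases hroot : χ root = k'
  · have hmid : ∀ b', χ (mid b') = k' := fun b' => spread root (by simp) hroot _ (adj_root_mid b')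
    have hleaf : ∀ b' ≠ b, ∀ t', χ (leaf b' t') = k' := fun b' hb' t' =>
      spread _ (by simpa using hb') (hmid b') _ (adj_mid_leaf b' t')
    have := eight_le_card_filter (χ · = k') hroot (.inl rfl) (fun b' _ => hmid b') hleaf
    have := hcount k'
    omega
  · have hmid : ∀ b' ≠ b, χ (mid b') = k := fun b' hb' => hk _ fun hm =>
      hroot (spread _ (by simpa using hb') hm _ (adj_root_mid b').symm)
    have hleaf : ∀ b' ≠ b, ∀ t', χ (leaf b' t') = k := fun b' hb' t' => hk _ fun hl =>
      h ((hmid b' hb').symm.trans (spread _ (by simp) hl _ (adj_mid_leaf b' t').symm))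
    have := eight_le_card_filter (χ · = k) (hk _ hroot) (.inr ⟨t, rfl⟩) hmid hleaf
    have := hcount k
    omega

end V10

/-- the 2-swap game of 5 red and 5 blue strategic agents on the 10-node
tree admits no equilibrium: for every assignment there are a red agent and a blue agent
who can both strictly increase their utility by swapping positions. -/
theorem no_equilibrium_two_types (σ : A10 ≃ V10) :
    ∃ i j : A10, i.1 = 0 ∧ j.1 = 1 ∧ improving G10 Prod.fst σ i j := by
  have hcount : ∀ k, #{v | (σ.symm v).1 = k} = 5 := fun k =>
    (card_filter_color_eq Prod.fst σ k).trans (by revert k; decide)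
  set χ : V10 → Fin 2 := fun v => (σ.symm v).1
  obtain ⟨b, t, hbt⟩ : ∃ b t, χ (.leaf b t) ≠ χ (.mid b) := by
    by_contra! h
    exact V10.card_filter_mod_three_ne_two (χ · = 0) (fun b t => by rw [h]) (by rw [hcount])
  obtain ⟨w, hwb, hwχ, hw⟩ := V10.exists_adj_of_leaf_ne_mid χ hcount hbt
  have himp : improving G10 Prod.fst σ (σ.symm (.leaf b t)) (σ.symm w) := by
    refine improving_of_surrounded (hbt.trans_eq hwχ.symm) ?_ ?_ ?_ ?_ <;>
      simp only [Equiv.apply_symm_apply]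
    · rwa [V10.adj_leaf_iff]
    · exact ⟨V10.mid b, V10.adj_leaf_iff.2 rfl⟩
    · intro x hx
      rw [V10.adj_leaf_iff.1 hx]
      exact hwχ.symm
    · exact hw
  have hcol : χ w ≠ χ (.leaf b t) := hwχ ▸ hbt.symm
  by_cases h0 : χ (.leaf b t) = 0
  · exact ⟨_, _, h0, show χ w = 1 by omega, himp⟩
  · exact ⟨_, _, show χ w = 0 by omega, show χ (.leaf b t) = 1 by omega, improving_comm.1 himp⟩

end SwapGame
end

section
/- Let k ≥ 3 and consider the k-swap game with k²−2 strategic agents of each type on the three-layer tree topology (root α, set B of k(k−1)−1 children, and k leaf children Γ_β per β ∈ B). No assignment in which every one of the k types has at least one agent occupying a node of B can be an equilibrium. -/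
/-!
Let `t₀` be the type of the root agent. In an equilibrium no agent on a leaf whose parent has
another type faces an agent `j` of the parent's type with a neighbour of the leaf's type: the
two would gain by swapping. Since every type occurs on `B`, all leaves below a `t₀`-node of
`B` have type `t₀`, and counting the `t₀`-agents modulo `k + 1` yields a `t₀`-leaf below a
node `b'` of some other type `s`. Then `b'` is the only `s`-node of `B`, and the other nodes of
`B` with an `s`-leaf have pairwise distinct types different from `s` and `t₀`. So the
`s`-agents lie in at most `k - 1` blocks (a node of `B` with its leaves), at most `k` in each,
and `k (k - 1) < k² - 2`.
-/

open Finset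

namespace SwapGame

/-- The three-layer tree topology for `k`-swap games: a root, a set `B` of
`k(k-1)-1` middle nodes (children of the root), and `k` leaf children per middle node. -/
inductive TV (k : ℕ) where
  | root : TV k
  | mid : Fin (k*(k-1)-1) → TV k
  | leaf : Fin (k*(k-1)-1) → Fin k → TV k
  deriving DecidableEq, Fintype

def adjT {k : ℕ} : TV k → TV k → Bool
  | .root, .mid _ => true
  | .mid i, .leaf j _ => i == j
  | _, _ => false

abbrev GT (k : ℕ) : SimpleGraph (TV k) := mkGraph (@adjT k)

/-- Agents: `k` types with `k^2 - 2` agents each; the type of an agent is its first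
component. -/
abbrev AgT (k : ℕ) := Fin k × Fin (k^2 - 2)

end SwapGame

namespace SwapGame

section General

variable {A V K : Type*} {σ : A ≃ V}

section Swap

variable [DecidableEq A]

@[simp]
theorem swapA_apply_left (i j : A) : swapA σ i j i = σ j := by
  simp [swapA]

@[simp]
theorem swapA_apply_right (i j : A) : swapA σ i j j = σ i := by
  simp [swapA]

theorem swapA_symm_apply_of_ne {i j : A} {v : V} (hi : v ≠ σ i) (hj : v ≠ σ j) :
    (swapA σ i j).symm v = σ.symm v :=
  Equiv.swap_apply_of_ne_of_ne (fun h => hi (by rw [← h, σ.apply_symm_apply]))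
    (fun h => hj (by rw [← h, σ.apply_symm_apply]))

end Swap

variable [Fintype V] [DecidableEq K] {G : SimpleGraph V} [DecidableRel G.Adj] {c : A → K}

theorem util_of_neighborFinset_eq_singleton {i : A} {p : V} (h : G.neighborFinset (σ i) = {p}) :
    util G c σ i = if c (σ.symm p) = c i then 1 else 0 := by
  unfold util
  rw [h]
  split_ifs with hp <;> simp [filter_singleton, hp]

theorem util_pos_of_adj {i : A} {w : V} (h : G.Adj (σ i) w) (hw : c (σ.symm w) = c i) :
    0 < util G c σ i := by
  have hmem : w ∈ G.neighborFinset (σ i) := (G.mem_neighborFinset _ _).2 h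
  unfold util
  apply div_pos
  · exact_mod_cast card_pos.2 ⟨w, mem_filter.2 ⟨hmem, hw⟩⟩
  · exact_mod_cast card_pos.2 ⟨w, hmem⟩

theorem util_lt_one_of_adj {i : A} {w : V} (h : G.Adj (σ i) w) (hw : c (σ.symm w) ≠ c i) :
    util G c σ i < 1 := by
  have hmem : w ∈ G.neighborFinset (σ i) := (G.mem_neighborFinset _ _).2 h
  unfold util
  rw [div_lt_one (by exact_mod_cast card_pos.2 ⟨w, hmem⟩)]
  exact_mod_cast card_lt_card <|
    (ssubset_iff_of_subset (filter_subset _ _)).2 ⟨w, hmem, by simp [hw]⟩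

/-- Agent `i` sits on a leaf hanging from a node `p` held by a friend of `j`, while `j` has a
friend of `i` next to it: `i` moves from utility `0` to a positive one, `j` from below `1`
to `1`. -/
theorem improving_of_leaf_swap [DecidableEq A] {i j : A} {p w : V}
    (hleaf : G.neighborFinset (σ i) = {p}) (hp : p ≠ σ j) (hpj : c (σ.symm p) = c j)
    (hij : c i ≠ c j) (hw : G.Adj (σ j) w) (hwi : c (σ.symm w) = c i) :
    improving G c σ i j := by
  have hp_adj : G.Adj (σ i) p := (G.mem_neighborFinset _ _).1 (hleaf ▸ mem_singleton_self p)
  have hwj : w ≠ σ j := (G.ne_of_adj hw).symm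
  have hwi' : w ≠ σ i := by
    rintro rfl
    have : σ j ∈ G.neighborFinset (σ i) := (G.mem_neighborFinset _ _).2 hw.symm
    rw [hleaf, mem_singleton] at this
    exact hp this.symm
  constructor
  · rw [util_of_neighborFinset_eq_singleton hleaf, if_neg (hpj.trans_ne hij.symm)]
    refine util_pos_of_adj (w := w) (by simpa using hw) ?_
    rwa [swapA_symm_apply_of_ne hwi' hwj]
  · calc util G c σ j < 1 := util_lt_one_of_adj hw (hwi ▸ hij)
      _ = util G c (swapA σ i j) j := by
        rw [util_of_neighborFinset_eq_singleton (p := p) (by rwa [swapA_apply_right]),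
          swapA_symm_apply_of_ne (G.ne_of_adj hp_adj).symm hp, if_pos hpj]

end General

section Tree

variable {k : ℕ}

theorem GT_adj_iff {v w : TV k} : (GT k).Adj v w ↔ v ≠ w ∧ (adjT v w ∨ adjT w v) := Iff.rfl

theorem neighborFinset_leaf (b : Fin (k*(k-1)-1)) (x : Fin k) :
    (GT k).neighborFinset (.leaf b x) = {.mid b} := by
  ext w
  rw [SimpleGraph.mem_neighborFinset, GT_adj_iff, mem_singleton]
  cases w <;> simp [adjT]

theorem adj_root_mid (b : Fin (k*(k-1)-1)) : (GT k).Adj .root (.mid b) := by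
  rw [GT_adj_iff]
  simp [adjT]

theorem adj_mid_leaf (b : Fin (k*(k-1)-1)) (x : Fin k) : (GT k).Adj (.mid b) (.leaf b x) := by
  rw [GT_adj_iff]
  simp [adjT]

theorem sum_univ_TV {M : Type*} [AddCommMonoid M] (f : TV k → M) :
    ∑ v, f v = f .root + ∑ b, (f (.mid b) + ∑ x, f (.leaf b x)) := by
  let e : Option (Fin (k*(k-1)-1) × Option (Fin k)) ≃ TV k :=
    { toFun := fun
        | none => .root
        | some (b, none) => .mid b
        | some (b, some x) => .leaf b x
      invFun := fun
        | .root => none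
        | .mid b => some (b, none)
        | .leaf b x => some (b, some x)
      left_inv := by rintro (_ | ⟨b, _ | x⟩) <;> rfl
      right_inv := by rintro (_ | b | ⟨b, x⟩) <;> rfl }
  rw [← e.sum_comp]
  simp [e, Fintype.sum_option, Fintype.sum_prod_type]

end Tree

section Counting

variable {k : ℕ}

def blockCount (σ : AgT k ≃ TV k) (t : Fin k) (b : Fin (k*(k-1)-1)) : ℕ :=
  (if (σ.symm (.mid b)).1 = t then 1 else 0) + #{x | (σ.symm (.leaf b x)).1 = t}

theorem root_add_sum_blockCount (σ : AgT k ≃ TV k) (t : Fin k) :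
    (if (σ.symm .root).1 = t then 1 else 0) + ∑ b, blockCount σ t b = k ^ 2 - 2 := by
  have hfiber : ∑ v : TV k, (if (σ.symm v).1 = t then 1 else 0) = k ^ 2 - 2 := by
    rw [σ.symm.sum_comp (fun a => if a.1 = t then 1 else 0), Fintype.sum_prod_type]
    simp [apply_ite card]
  rw [sum_univ_TV] at hfiber
  simpa only [blockCount, card_filter] using hfiber

variable {σ : AgT k ≃ TV k} {t : Fin k} {b : Fin (k*(k-1)-1)}

theorem blockCount_le_of_mid_ne (h : (σ.symm (.mid b)).1 ≠ t) : blockCount σ t b ≤ k := by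
  have := card_filter_le (univ : Finset (Fin k)) fun y => (σ.symm (.leaf b y)).1 = t
  simpa [blockCount, h] using this

theorem blockCount_le_of_leaf_ne {x : Fin k} (h : (σ.symm (.leaf b x)).1 ≠ t) :
    blockCount σ t b ≤ k := by
  have hleaves : #{y | (σ.symm (.leaf b y)).1 = t} ≤ #(univ.erase x) :=
    card_le_card fun y hy =>
      mem_erase.2 ⟨by rintro rfl; exact h (mem_filter.1 hy).2, mem_univ y⟩
  rw [card_erase_of_mem (mem_univ x), card_univ, Fintype.card_fin] at hleaves
  have := x.pos
  unfold blockCount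
  split_ifs <;> omega

theorem blockCount_eq_succ (hm : (σ.symm (.mid b)).1 = t)
    (hl : ∀ x, (σ.symm (.leaf b x)).1 = t) : blockCount σ t b = k + 1 := by
  simp [blockCount, hm, hl, add_comm]

theorem exists_leaf_of_blockCount_ne_zero (hm : (σ.symm (.mid b)).1 ≠ t)
    (h : blockCount σ t b ≠ 0) : ∃ x, (σ.symm (.leaf b x)).1 = t := by
  simpa [blockCount, hm, filter_nonempty_iff] using h

end Counting

theorem one_add_succ_mul_ne {k : ℕ} (hk : 3 ≤ k) (q : ℕ) : 1 + (k + 1) * q ≠ k ^ 2 - 2 := by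
  intro h
  have : 2 ≤ k ^ 2 := by nlinarith
  zify [this] at h
  rcases le_or_gt (q + 2) k with hq | hq <;> nlinarith

theorem pred_mul_lt_sq_sub_two {k : ℕ} (hk : 3 ≤ k) : (k - 1) * k < k ^ 2 - 2 := by
  have : 2 ≤ k ^ 2 := by nlinarith
  zify [this, (by omega : 1 ≤ k)]
  nlinarith

section Equilibrium

variable {k : ℕ} {σ : AgT k ≃ TV k}

theorem leaf_type_eq_of_isEquilibrium (heq : isEquilibrium (GT k) Prod.fst σ)
    {b : Fin (k*(k-1)-1)} {x : Fin k} {v w : TV k} (hv : v ≠ .mid b) (hw : (GT k).Adj v w)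
    (hwt : (σ.symm w).1 = (σ.symm (.leaf b x)).1)
    (hb : (σ.symm (.mid b)).1 = (σ.symm v).1) :
    (σ.symm (.leaf b x)).1 = (σ.symm v).1 := by
  by_contra hne
  refine heq ⟨σ.symm (.leaf b x), σ.symm v, improving_of_leaf_swap ?_ ?_ hb hne ?_ hwt⟩
  · rw [σ.apply_symm_apply]
    exact neighborFinset_leaf b x
  · rwa [σ.apply_symm_apply, ne_comm]
  · rwa [σ.apply_symm_apply]

theorem leaf_type_eq_root_of_mid (heq : isEquilibrium (GT k) Prod.fst σ)
    (hall : ∀ t : Fin k, ∃ b : Fin (k*(k-1)-1), (σ.symm (TV.mid b)).1 = t)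
    {b : Fin (k*(k-1)-1)} (hb : (σ.symm (.mid b)).1 = (σ.symm .root).1) (x : Fin k) :
    (σ.symm (.leaf b x)).1 = (σ.symm .root).1 :=
  let ⟨b₁, hb₁⟩ := hall (σ.symm (.leaf b x)).1
  leaf_type_eq_of_isEquilibrium heq nofun (adj_root_mid b₁) hb₁ hb

theorem mid_type_ne_of_isEquilibrium (heq : isEquilibrium (GT k) Prod.fst σ)
    {b₁ b₂ : Fin (k*(k-1)-1)} {x : Fin k} {w : TV k} (hb : b₁ ≠ b₂)
    (hw : (GT k).Adj (.mid b₂) w) (hwt : (σ.symm w).1 = (σ.symm (.leaf b₁ x)).1)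
    (hne : (σ.symm (.leaf b₁ x)).1 ≠ (σ.symm (.mid b₂)).1) :
    (σ.symm (.mid b₁)).1 ≠ (σ.symm (.mid b₂)).1 := fun hb' =>
  hne (leaf_type_eq_of_isEquilibrium heq (fun h => hb (TV.mid.inj h).symm) hw hwt hb')

theorem mid_type_ne_of_misplaced_leaf (heq : isEquilibrium (GT k) Prod.fst σ)
    {b b' : Fin (k*(k-1)-1)} {x : Fin k} (hx : (σ.symm (.leaf b' x)).1 = (σ.symm .root).1)
    (hb' : (σ.symm (.mid b')).1 ≠ (σ.symm .root).1) (hb : b ≠ b') :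
    (σ.symm (.mid b)).1 ≠ (σ.symm (.mid b')).1 := fun h =>
  mid_type_ne_of_isEquilibrium heq (Ne.symm hb) (adj_root_mid b).symm hx.symm
    (by rwa [hx, h, ne_comm]) h.symm

theorem exists_misplaced_leaf (hk : 3 ≤ k) (heq : isEquilibrium (GT k) Prod.fst σ)
    (hall : ∀ t : Fin k, ∃ b : Fin (k*(k-1)-1), (σ.symm (TV.mid b)).1 = t) :
    ∃ b x, (σ.symm (.leaf b x)).1 = (σ.symm .root).1 ∧
      (σ.symm (.mid b)).1 ≠ (σ.symm .root).1 := by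
  by_contra! h
  have hdvd : ∀ b, k + 1 ∣ blockCount σ (σ.symm .root).1 b := by
    intro b
    by_cases hm : (σ.symm (.mid b)).1 = (σ.symm .root).1
    · rw [blockCount_eq_succ hm (leaf_type_eq_root_of_mid heq hall hm)]
    · rcases eq_or_ne (blockCount σ (σ.symm .root).1 b) 0 with h0 | h0
      · exact h0 ▸ dvd_zero _
      · obtain ⟨x, hx⟩ := exists_leaf_of_blockCount_ne_zero hm h0
        exact absurd (h b x hx) hm
  obtain ⟨q, hq⟩ := dvd_sum fun b _ => hdvd b
  have hcount := root_add_sum_blockCount σ (σ.symm .root).1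
  rw [if_pos rfl, hq] at hcount
  exact one_add_succ_mul_ne hk q hcount

theorem card_blockCount_ne_zero_le (heq : isEquilibrium (GT k) Prod.fst σ)
    (hall : ∀ t : Fin k, ∃ b : Fin (k*(k-1)-1), (σ.symm (TV.mid b)).1 = t)
    {b' : Fin (k*(k-1)-1)} {x : Fin k} (hx : (σ.symm (.leaf b' x)).1 = (σ.symm .root).1)
    (hb' : (σ.symm (.mid b')).1 ≠ (σ.symm .root).1) :
    #{b | blockCount σ (σ.symm (.mid b')).1 b ≠ 0} ≤ k - 1 := by
  set s := (σ.symm (.mid b')).1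
  have hmid : ∀ b, (σ.symm (.mid b)).1 = s → b = b' := fun b h =>
    by_contra fun hb => mid_type_ne_of_misplaced_leaf heq hx hb' hb h
  have hleaf : ∀ b, blockCount σ s b ≠ 0 → (σ.symm (.mid b)).1 ≠ s →
      ∃ y, (σ.symm (.leaf b y)).1 = s :=
    fun _ h hm => exists_leaf_of_blockCount_ne_zero hm h
  calc #{b | blockCount σ s b ≠ 0}
      ≤ #(univ.erase (σ.symm .root).1) := by
        refine card_le_card_of_injOn (fun b => (σ.symm (.mid b)).1) ?_ ?_
        · intro b hb
          replace hb := (mem_filter.1 (mem_coe.1 hb)).2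
          refine mem_erase.2 ⟨fun hroot => ?_, mem_univ _⟩
          obtain ⟨y, hy⟩ := hleaf b hb (hroot.trans_ne (Ne.symm hb'))
          exact hb' (hy ▸ leaf_type_eq_root_of_mid heq hall hroot y)
        · intro b₁ hb₁ b₂ hb₂ (h : (σ.symm (.mid b₁)).1 = (σ.symm (.mid b₂)).1)
          replace hb₁ := (mem_filter.1 (mem_coe.1 hb₁)).2
          replace hb₂ := (mem_filter.1 (mem_coe.1 hb₂)).2
          by_cases hs : (σ.symm (.mid b₁)).1 = s
          · rw [hmid b₁ hs, hmid b₂ (h ▸ hs)]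
          obtain ⟨y₁, hy₁⟩ := hleaf b₁ hb₁ hs
          obtain ⟨y₂, hy₂⟩ := hleaf b₂ hb₂ (h ▸ hs)
          by_contra hne
          exact mid_type_ne_of_isEquilibrium heq hne (adj_mid_leaf b₂ y₂)
            (hy₂.trans hy₁.symm) (by rw [hy₁, ← h]; exact Ne.symm hs) h
    _ = k - 1 := by simp

end Equilibrium

/-- Lemma 2 of the paper: in the `k`-swap game (`k ≥ 3`) with `k² − 2`
strategic agents per type on the three-layer tree, no assignment in which every one of
the `k` types has an agent occupying a middle node (a node of `B`) is an equilibrium. -/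
theorem not_equilibrium_of_all_types_on_mid (k : ℕ) (hk : 3 ≤ k) (σ : AgT k ≃ TV k)
    (hall : ∀ t : Fin k, ∃ b : Fin (k*(k-1)-1), (σ.symm (TV.mid b)).1 = t) :
    ¬ isEquilibrium (GT k) Prod.fst σ := by
  intro heq
  obtain ⟨b', x, hx, hb'⟩ := exists_misplaced_leaf hk heq hall
  set s := (σ.symm (.mid b')).1
  have hblock : ∀ b, blockCount σ s b ≤ k := fun b => by
    by_cases hb : b = b'
    · exact hb ▸ blockCount_le_of_leaf_ne (x := x) (hx.trans_ne (Ne.symm hb'))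
    · exact blockCount_le_of_mid_ne (mid_type_ne_of_misplaced_leaf heq hx hb' hb)
  have hcount := root_add_sum_blockCount σ s
  rw [if_neg (Ne.symm hb'), zero_add] at hcount
  refine (pred_mul_lt_sq_sub_two hk).not_ge ?_
  calc k ^ 2 - 2
      = ∑ b ∈ {b | blockCount σ s b ≠ 0}, blockCount σ s b := by
        rw [sum_filter_ne_zero, hcount]
    _ ≤ #{b | blockCount σ s b ≠ 0} * k := sum_le_card_nsmul _ _ _ fun b _ => hblock b
    _ ≤ (k - 1) * k := Nat.mul_le_mul_right k (card_blockCount_ne_zero_le heq hall hx hb')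

end SwapGame
end

section
/- Consider a k-swap game whose topology is a connected δ-regular graph, and define Φ̄(v) = Σ_{i} |N_i(v) ∩ F_i|, the total number of (ordered) agent–friend adjacencies under assignment v. If agents i and j are of different types and both strictly increase their utility by swapping positions (i.e., u_i(v^{i↔j}) > u_i(v) and u_j(v^{i↔j}) > u_j(v)), then Φ̄(v^{i↔j}) > Φ̄(v). Moreover, on a δ-regular topology SW(v) = Φ̄(v)/δ for every assignment v. -/
/-!
Encode an assignment `σ` by the colouring `τ = c ∘ σ.symm` of the nodes by the type of their
occupant; swapping agents `i` and `j` composes `τ` with the transposition of their nodes `x`, `y`,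
and `Φ̄` counts ordered pairs of adjacent nodes of equal colour. Since `τ x ≠ τ y`, no such pair
lies inside `{x, y}`, so `Φ̄` is the number of pairs avoiding `{x, y}`, which the swap does not
change, plus twice the friend counts at `x` and `y`. On a `δ`-regular graph a utility is a friend
count divided by `δ`, so a swap improving both agents raises both friend counts and hence `Φ̄`,
and summing utilities gives `SW = Φ̄ / δ`.
-/

open Finset

namespace SwapGame

/-- The potential `Φ̄(v) = Σ_i |N_i(v) ∩ F_i|`: the total number of agent–friend
adjacencies under assignment `v`. -/
def potBar {A V K : Type*} [Fintype A] [Fintype V] [DecidableEq A] [DecidableEq V]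
    [DecidableEq K] (G : SimpleGraph V) [DecidableRel G.Adj] (c : A → K)
    (σ : A ≃ V) : ℕ :=
  ∑ i : A, ((G.neighborFinset (σ i)).filter (fun w => c (σ.symm w) = c i)).card

end SwapGame

theorem Finset.sum_sum_eq_sum_compl_sum_compl_add_two_nsmul {ι M : Type*} [Fintype ι]
    [DecidableEq ι] [AddCommMonoid M] (f : ι → ι → M) (S : Finset ι)
    (hf : ∀ a b, f a b = f b a) (hS : ∀ a ∈ S, ∀ b ∈ S, f a b = 0) :
    ∑ a, ∑ b, f a b = ∑ a ∈ Sᶜ, ∑ b ∈ Sᶜ, f a b + 2 • ∑ a ∈ S, ∑ b, f a b := by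
  have hrow : ∀ a ∈ S, ∑ b, f a b = ∑ b ∈ Sᶜ, f a b := fun a ha => by
    rw [← sum_compl_add_sum S, sum_eq_zero (hS a ha), add_zero]
  have hcross : ∑ a ∈ Sᶜ, ∑ b ∈ S, f a b = ∑ a ∈ S, ∑ b, f a b := by
    rw [sum_comm]
    exact sum_congr rfl fun a ha => by rw [hrow a ha]; exact sum_congr rfl fun b _ => hf b a
  calc ∑ a, ∑ b, f a b
      = ∑ a ∈ Sᶜ, (∑ b ∈ Sᶜ, f a b + ∑ b ∈ S, f a b) + ∑ a ∈ S, ∑ b, f a b := by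
        simp only [sum_compl_add_sum]
    _ = ∑ a ∈ Sᶜ, ∑ b ∈ Sᶜ, f a b + 2 • ∑ a ∈ S, ∑ b, f a b := by
        rw [sum_add_distrib, hcross, add_assoc, two_nsmul]

namespace SwapGame

section FriendCount

variable {V K : Type*} [Fintype V] [DecidableEq K] (G : SimpleGraph V) [DecidableRel G.Adj]

def friendCount (τ : V → K) (u : V) : ℕ :=
  #{w ∈ G.neighborFinset u | τ w = τ u}

theorem friendCount_eq_sum (τ : V → K) (u : V) :
    friendCount G τ u = ∑ w, if G.Adj u w ∧ τ w = τ u then 1 else 0 := by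
  rw [friendCount, SimpleGraph.neighborFinset_eq_filter, filter_filter, card_filter]

variable [DecidableEq V]

theorem sum_friendCount_eq_of_ne {τ : V → K} {x y : V} (hτ : τ x ≠ τ y) :
    ∑ u, friendCount G τ u = ∑ u ∈ {x, y}ᶜ, ∑ w ∈ {x, y}ᶜ,
      (if G.Adj u w ∧ τ w = τ u then 1 else 0) + 2 * (friendCount G τ x + friendCount G τ y) := by
  have hxy : x ≠ y := ne_of_apply_ne τ hτ
  simp only [friendCount_eq_sum]
  rw [sum_sum_eq_sum_compl_sum_compl_add_two_nsmul _ {x, y}, sum_pair hxy, smul_eq_mul]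
  · intro u w
    simp only [G.adj_comm u w, eq_comm]
  · simp only [mem_insert, mem_singleton]
    rintro a (rfl | rfl) b (rfl | rfl) <;> simp [hτ, hτ.symm]

theorem sum_friendCount_lt_comp_swap {τ : V → K} {x y : V} (hτ : τ x ≠ τ y)
    (hx : friendCount G τ x < friendCount G (τ ∘ Equiv.swap x y) y)
    (hy : friendCount G τ y < friendCount G (τ ∘ Equiv.swap x y) x) :
    ∑ u, friendCount G τ u < ∑ u, friendCount G (τ ∘ Equiv.swap x y) u := by
  have hτ' : (τ ∘ Equiv.swap x y) x ≠ (τ ∘ Equiv.swap x y) y := by simpa using hτ.symm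
  have hoff : ∀ u ∈ ({x, y} : Finset V)ᶜ, (τ ∘ Equiv.swap x y) u = τ u := fun u hu => by
    simp only [mem_compl, mem_insert, mem_singleton, not_or] at hu
    simp [Equiv.swap_apply_of_ne_of_ne hu.1 hu.2]
  have hinside : ∑ u ∈ {x, y}ᶜ, ∑ w ∈ {x, y}ᶜ,
      (if G.Adj u w ∧ (τ ∘ Equiv.swap x y) w = (τ ∘ Equiv.swap x y) u then 1 else 0) =
      ∑ u ∈ {x, y}ᶜ, ∑ w ∈ {x, y}ᶜ, (if G.Adj u w ∧ τ w = τ u then 1 else 0) :=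
    sum_congr rfl fun u hu => sum_congr rfl fun w hw => by rw [hoff u hu, hoff w hw]
  rw [sum_friendCount_eq_of_ne G hτ, sum_friendCount_eq_of_ne G hτ', hinside]
  omega

end FriendCount

section Assignment

variable {A V K : Type*}

theorem comp_symm_swapA [DecidableEq A] [DecidableEq V] (c : A → K) (σ : A ≃ V) (i j : A) :
    c ∘ (swapA σ i j).symm = c ∘ σ.symm ∘ Equiv.swap (σ i) (σ j) := by
  rw [← Equiv.symm_trans_swap_trans i j σ]
  ext w
  simp only [swapA, Function.comp_apply, Equiv.symm_trans_apply, Equiv.trans_apply,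
    Equiv.symm_swap, Equiv.symm_apply_apply]

variable [Fintype V] [DecidableEq K] (G : SimpleGraph V) [DecidableRel G.Adj] (c : A → K)

theorem potBar_eq_sum_friendCount [Fintype A] [DecidableEq A] [DecidableEq V] (σ : A ≃ V) :
    potBar G c σ = ∑ u, friendCount G (c ∘ σ.symm) u := by
  rw [potBar, ← σ.sum_comp]
  simp [friendCount]

theorem util_eq_friendCount_div (σ : A ≃ V) (i : A) :
    util G c σ i = friendCount G (c ∘ σ.symm) (σ i) / G.degree (σ i) := by
  simp [util, friendCount]

theorem friendCount_lt_of_improving [DecidableEq A] {δ : ℕ} (hreg : G.IsRegularOfDegree δ)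
    {σ : A ≃ V} {i j : A} (h : improving G c σ i j) :
    friendCount G (c ∘ σ.symm) (σ i) < friendCount G (c ∘ (swapA σ i j).symm) (σ j) ∧
      friendCount G (c ∘ σ.symm) (σ j) < friendCount G (c ∘ (swapA σ i j).symm) (σ i) := by
  have hδ : (0 : ℚ) < δ := by
    rcases Nat.eq_zero_or_pos δ with rfl | hδ
    · simp [improving, util_eq_friendCount_div, hreg _] at h
    · exact_mod_cast hδ
  simp only [improving, util_eq_friendCount_div, hreg _, div_lt_div_iff_of_pos_right hδ,
    Nat.cast_lt] at h
  simpa [swapA] using h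

end Assignment

theorem potential_regular_general {A V : Type} [Fintype A] [DecidableEq A]
    [Fintype V] [DecidableEq V] (G : SimpleGraph V) [DecidableRel G.Adj]
    (δ k : ℕ) (hreg : G.IsRegularOfDegree δ)
    (c : A → Fin k) :
    (∀ (σ : A ≃ V) (i j : A), c i ≠ c j → improving G c σ i j →
        potBar G c σ < potBar G c (swapA σ i j)) ∧
    (∀ σ : A ≃ V, SW G c σ = (potBar G c σ : ℚ) / (δ : ℚ)) := by
  refine ⟨fun σ i j hc himp => ?_, fun σ => ?_⟩
  · obtain ⟨hi, hj⟩ := friendCount_lt_of_improving G c hreg himp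
    rw [comp_symm_swapA] at hi hj
    rw [potBar_eq_sum_friendCount, potBar_eq_sum_friendCount, comp_symm_swapA]
    exact sum_friendCount_lt_comp_swap G (by simpa using hc) hi hj
  · simp only [SW, util_eq_friendCount_div, hreg _, potBar_eq_sum_friendCount, Nat.cast_sum,
      sum_div]
    exact σ.sum_comp fun u => (friendCount G (c ∘ σ.symm) u : ℚ) / δ

/-- in a `k`-swap game on a connected `δ`-regular topology, `Φ̄` is a
potential maximization function: if agents `i` and `j` of different types both strictly
increase their utility by swapping, then `Φ̄` strictly increases; moreover
`SW(v) = Φ̄(v)/δ` for every assignment `v`. -/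
theorem potential_regular {A V : Type} [Fintype A] [DecidableEq A]
    [Fintype V] [DecidableEq V] (G : SimpleGraph V) [DecidableRel G.Adj]
    (hconn : G.Connected) (δ k : ℕ) (hreg : G.IsRegularOfDegree δ)
    (c : A → Fin k) (hne : ∀ t : Fin k, ∃ i, c i = t) :
    (∀ (σ : A ≃ V) (i j : A), c i ≠ c j → improving G c σ i j →
        potBar G c σ < potBar G c (swapA σ i j)) ∧
    (∀ σ : A ≃ V, SW G c σ = (potBar G c σ : ℚ) / (δ : ℚ)) :=
  potential_regular_general G δ k hreg c

end SwapGame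
end

section
/- In every k-swap game with only strategic agents whose topology is a connected δ-regular graph, there exists an assignment that is simultaneously an equilibrium and maximizes the social welfare over all assignments. Hence the social price of stability of k-swap games on δ-regular topologies is 1. -/
open Finset

/-!
On a `δ`-regular topology the utility of an agent is its number of friends among its neighbours
divided by `δ`, so the social welfare is `2/δ` times the number of edges joining friends. Swapping
`i` and `j` only changes edges at their two nodes (an edge between those two nodes joins friends
before the swap iff it does after), and the change in friendly edges is exactly `δ` times the sum
of the utility gains of `i` and `j`. So the welfare is an exact potential: an improving swap
strictly increases it, and any welfare-maximizing assignment is an equilibrium.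
-/

section DoubleSum

variable {ι M : Type*} [Fintype ι] [DecidableEq ι] [AddCommMonoid M]

theorem Finset.sum_sum_eq_two_nsmul_of_symm (D : ι → ι → M) (S : Finset ι)
    (hsymm : ∀ a b, D a b = D b a) (hout : ∀ a ∉ S, ∀ b ∉ S, D a b = 0)
    (hin : ∀ a ∈ S, ∀ b ∈ S, D a b = 0) :
    ∑ a, ∑ b, D a b = 2 • ∑ a ∈ S, ∑ b, D a b := by
  have row_out : ∀ a ∈ Sᶜ, ∑ b, D a b = ∑ b ∈ S, D b a := fun a ha => by
    rw [← sum_add_sum_compl S,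
      sum_eq_zero fun b hb => hout a (mem_compl.1 ha) b (mem_compl.1 hb), add_zero]
    exact sum_congr rfl fun b _ => hsymm a b
  have row_in : ∀ b ∈ S, ∑ a ∈ Sᶜ, D b a = ∑ a, D b a := fun b hb => by
    rw [← sum_add_sum_compl S, sum_eq_zero fun a ha => hin b hb a ha, zero_add]
  calc ∑ a, ∑ b, D a b = ∑ a ∈ S, ∑ b, D a b + ∑ a ∈ Sᶜ, ∑ b ∈ S, D b a := by
        rw [← sum_add_sum_compl S, sum_congr rfl row_out]
    _ = ∑ a ∈ S, ∑ b, D a b + ∑ b ∈ S, ∑ a ∈ Sᶜ, D b a := congrArg _ sum_comm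
    _ = 2 • ∑ a ∈ S, ∑ b, D a b := by rw [sum_congr rfl row_in, two_nsmul]

end DoubleSum

namespace SwapGame

def friendAdj {A V K : Type*} [DecidableEq K] (G : SimpleGraph V) [DecidableRel G.Adj]
    (c : A → K) (σ : A ≃ V) (a b : A) : ℚ :=
  if G.Adj (σ a) (σ b) ∧ c a = c b then 1 else 0

section

variable {A V K : Type*} [DecidableEq K] {G : SimpleGraph V} [DecidableRel G.Adj] (c : A → K)

theorem friendAdj_comm (σ : A ≃ V) (a b : A) : friendAdj G c σ a b = friendAdj G c σ b a := by
  simp only [friendAdj, G.adj_comm, eq_comm]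

section Regular

variable [Fintype A] [Fintype V] {δ : ℕ}

theorem util_eq_sum_friendAdj_div (hreg : G.IsRegularOfDegree δ) (σ : A ≃ V) (a : A) :
    util G c σ a = (∑ b, friendAdj G c σ a b) / δ := by
  rw [util, SimpleGraph.card_neighborFinset_eq_degree, hreg (σ a)]
  congr 1
  rw [← Equiv.sum_comp σ.symm]
  simp [friendAdj, sum_boole, SimpleGraph.neighborFinset_eq_filter, filter_filter, eq_comm]

theorem SW_eq_sum_friendAdj_div (hreg : G.IsRegularOfDegree δ) (σ : A ≃ V) :
    SW G c σ = (∑ a, ∑ b, friendAdj G c σ a b) / δ := by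
  rw [SW, sum_div]
  exact sum_congr rfl fun a _ => util_eq_sum_friendAdj_div c hreg σ a

end Regular

variable [DecidableEq A]

theorem friendAdj_swapA_of_ne (σ : A ≃ V) {i j a b : A} (hai : a ≠ i) (haj : a ≠ j)
    (hbi : b ≠ i) (hbj : b ≠ j) : friendAdj G c (swapA σ i j) a b = friendAdj G c σ a b := by
  rw [friendAdj, swapA, Equiv.trans_apply, Equiv.trans_apply,
    Equiv.swap_apply_of_ne_of_ne hai haj, Equiv.swap_apply_of_ne_of_ne hbi hbj, friendAdj]

theorem friendAdj_swapA_of_mem (σ : A ≃ V) {i j a b : A} (ha : a ∈ ({i, j} : Finset A))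
    (hb : b ∈ ({i, j} : Finset A)) : friendAdj G c (swapA σ i j) a b = friendAdj G c σ a b := by
  simp only [mem_insert, mem_singleton] at ha hb
  rcases ha with rfl | rfl <;> rcases hb with rfl | rfl <;> simp [friendAdj, swapA, G.adj_comm]

variable [Fintype A] [Fintype V] {δ : ℕ}

theorem SW_swapA_sub_SW (hreg : G.IsRegularOfDegree δ) (σ : A ≃ V) (i j : A) :
    SW G c (swapA σ i j) - SW G c σ =
      2 * ∑ a ∈ {i, j}, (util G c (swapA σ i j) a - util G c σ a) := by
  set D : A → A → ℚ := fun a b => friendAdj G c (swapA σ i j) a b - friendAdj G c σ a b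
  have hD : ∑ a, ∑ b, D a b = 2 • ∑ a ∈ {i, j}, ∑ b, D a b := by
    refine Finset.sum_sum_eq_two_nsmul_of_symm D {i, j} (fun a b => ?_) (fun a ha b hb => ?_)
      fun a ha b hb => sub_eq_zero.2 (friendAdj_swapA_of_mem c σ ha hb)
    · simp only [D, friendAdj_comm c _ a b]
    · simp only [mem_insert, mem_singleton, not_or] at ha hb
      exact sub_eq_zero.2 (friendAdj_swapA_of_ne c σ ha.1 ha.2 hb.1 hb.2)
  simp only [SW_eq_sum_friendAdj_div c hreg, util_eq_sum_friendAdj_div c hreg, ← sub_div,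
    ← sum_sub_distrib, ← sum_div, ← mul_div_assoc]
  rw [hD, nsmul_eq_mul, Nat.cast_ofNat]

theorem improving.SW_lt (hreg : G.IsRegularOfDegree δ) {σ : A ≃ V} {i j : A}
    (h : improving G c σ i j) : SW G c σ < SW G c (swapA σ i j) := by
  have gain_pos : 0 < ∑ a ∈ {i, j}, (util G c (swapA σ i j) a - util G c σ a) := by
    refine sum_pos (fun a ha => ?_) (insert_nonempty i {j})
    rcases mem_insert.1 ha with rfl | ha
    · exact sub_pos.2 h.1
    · obtain rfl := mem_singleton.1 ha
      exact sub_pos.2 h.2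
  linarith [SW_swapA_sub_SW c hreg σ i j]

theorem isEquilibrium_of_forall_SW_le (hreg : G.IsRegularOfDegree δ) {σ : A ≃ V}
    (hmax : ∀ σ', SW G c σ' ≤ SW G c σ) : isEquilibrium G c σ :=
  fun ⟨_, _, h⟩ => (h.SW_lt c hreg).not_ge (hmax _)

end

theorem pos_one_regular_general {A V : Type} [Fintype A] [DecidableEq A]
    [Fintype V] (G : SimpleGraph V) [DecidableRel G.Adj]
    (δ k : ℕ) (hreg : G.IsRegularOfDegree δ)
    (c : A → Fin k)
    (hcard : Fintype.card A = Fintype.card V) :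
    ∃ σ : A ≃ V, isEquilibrium G c σ ∧ ∀ σ' : A ≃ V, SW G c σ' ≤ SW G c σ := by
  have : Nonempty (A ≃ V) := ⟨Fintype.equivOfCardEq hcard⟩
  obtain ⟨σ, hσ⟩ := Finite.exists_max (SW G c)
  exact ⟨σ, isEquilibrium_of_forall_SW_le c hreg hσ, hσ⟩

/-- in every `k`-swap game with only strategic agents on a connected
`δ`-regular topology (with as many agents as nodes), there is an assignment that is
simultaneously an equilibrium and maximizes the social welfare over all assignments;
hence the social price of stability on `δ`-regular topologies is `1`. -/
theorem pos_one_regular {A V : Type} [Fintype A] [DecidableEq A]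
    [Fintype V] [DecidableEq V] (G : SimpleGraph V) [DecidableRel G.Adj]
    (hconn : G.Connected) (δ k : ℕ) (hreg : G.IsRegularOfDegree δ)
    (c : A → Fin k) (hne : ∀ t : Fin k, ∃ i, c i = t)
    (hcard : Fintype.card A = Fintype.card V) :
    ∃ σ : A ≃ V, isEquilibrium G c σ ∧ ∀ σ' : A ≃ V, SW G c σ' ≤ SW G c σ :=
  pos_one_regular_general G δ k hreg c hcard
end SwapGame
end

section
/- Let H = (X, Y) be an undirected graph with no isolated vertices and let λ ≤ |X| be a positive integer. Construct the 2-swap game with |X| + |Y| − λ strategic red agents and λ strategic blue agents whose topology is obtained from H by adding, for each edge e = {v, w} ∈ Y, a new node s_e adjacent to both v and w. Then there exists an assignment of the agents to the nodes under which every agent is exposed (has at least one neighbor of the other type) if and only if H has a vertex cover of size at most λ. -/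
open Finset

namespace SwapGame

/-- The topology of the vertex-cover construction: the nodes of `H` together with one
node `s_e` per edge `e` of `H`, where `s_e` is adjacent to both endpoints of `e`. -/
abbrev VVC {X : Type} [Fintype X] [DecidableEq X] (H : SimpleGraph X)
    [DecidableRel H.Adj] : Type :=
  X ⊕ {e : Sym2 X // e ∈ H.edgeFinset}

def adjVC {X : Type} [Fintype X] [DecidableEq X] (H : SimpleGraph X)
    [DecidableRel H.Adj] : VVC H → VVC H → Bool
  | .inl x, .inl y => decide (H.Adj x y)
  | .inl x, .inr e => decide (x ∈ e.1)
  | _, _ => false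

/-- Agents: `|X| + |Y| − λ` strategic red agents and `λ` strategic blue agents. -/
abbrev AVC {X : Type} [Fintype X] [DecidableEq X] (H : SimpleGraph X)
    [DecidableRel H.Adj] (lam : ℕ) : Type :=
  Fin (Fintype.card X + H.edgeFinset.card - lam) ⊕ Fin lam

/-- The type (color) of each agent: `0` = red, `1` = blue. -/
def cVC {X : Type} [Fintype X] [DecidableEq X] (H : SimpleGraph X)
    [DecidableRel H.Adj] (lam : ℕ) : AVC H lam → Fin 2 :=
  Sum.elim (fun _ => 0) (fun _ => 1)

/-!
Colour blue the nodes occupied by blue agents. Every agent is exposed exactly when every node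
has a neighbour on the other side of this set `B` of `λ` nodes. Given a vertex cover, pad it to
exactly `λ` vertices (possible as `λ ≤ |X|`) and take it as `B`: an uncovered vertex has a
covered neighbour, a covered vertex `x` has the red node `s_{xw}` for any edge `xw` (there is
one, as `x` is not isolated), and `s_e` sees a covered endpoint of `e`. Conversely, moving each
blue `s_e` to an endpoint of `e` turns `B` into a cover of size at most `λ`: a red `s_e` needs a
blue neighbour, and its only neighbours are the endpoints of `e`.
-/

def IsSpanningCut {V : Type*} (G : SimpleGraph V) (B : Set V) : Prop :=
  ∀ v, ∃ u, G.Adj v u ∧ (u ∈ B ↔ v ∉ B)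

section Assignments

variable {A V : Type*} [Fintype V]

theorem exposed_iff_exists_adj {K : Type*} [DecidableEq K] (G : SimpleGraph V)
    [DecidableRel G.Adj] (c : A → K) (σ : A ≃ V) (i : A) :
    exposed G c σ i ↔ ∃ v, G.Adj (σ i) v ∧ c (σ.symm v) ≠ c i := by
  simp [exposed, Finset.filter_nonempty_iff]

theorem forall_exposed_iff_isSpanningCut (G : SimpleGraph V) [DecidableRel G.Adj]
    (c : A → Fin 2) (σ : A ≃ V) :
    (∀ i, exposed G c σ i) ↔ IsSpanningCut G {v | c (σ.symm v) = 1} := by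
  unfold IsSpanningCut
  have fin_two_ne_iff (a b : Fin 2) : a ≠ b ↔ (a = 1 ↔ b ≠ 1) := by revert a b; decide
  refine σ.forall_congr' fun v => ?_
  simp only [exposed_iff_exists_adj, Equiv.apply_symm_apply, Set.mem_ofPred_eq]
  exact exists_congr fun u => and_congr_right fun _ => fin_two_ne_iff _ _

theorem sumElim_eq_one_iff {n m : ℕ} (a : Fin n ⊕ Fin m) :
    Sum.elim (fun _ => (0 : Fin 2)) (fun _ => 1) a = 1 ↔ a ∈ Set.range Sum.inr := by
  cases a <;> simp

theorem exists_equiv_range_inr_eq {n m : ℕ} [DecidableEq V] (B : Finset V) (hB : #B = m)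
    (hV : Fintype.card V = n + m) : ∃ σ : Fin n ⊕ Fin m ≃ V, Set.range (σ ∘ Sum.inr) = B := by
  have hBc : Fintype.card {v // v ∉ B} = n := by
    rw [Fintype.card_subtype_compl, Fintype.card_coe, hB, hV, Nat.add_sub_cancel]
  let eB : Fin m ≃ {v // v ∈ B} := (B.equivFinOfCardEq hB).symm
  let eR : Fin n ≃ {v // v ∉ B} := (Fintype.equivFinOfCardEq hBc).symm
  refine ⟨(Equiv.sumComm _ _).trans ((eB.sumCongr eR).trans (Equiv.sumCompl (· ∈ B))), ?_⟩
  change Set.range (Subtype.val ∘ eB) = B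
  rw [EquivLike.range_comp, Subtype.range_coe_subtype, Finset.setOfPred_mem]

theorem exists_forall_exposed_iff {n m : ℕ} [DecidableEq V] (G : SimpleGraph V)
    [DecidableRel G.Adj] (hV : Fintype.card V = n + m) :
    (∃ σ : Fin n ⊕ Fin m ≃ V,
        ∀ i, exposed G (Sum.elim (fun _ => (0 : Fin 2)) (fun _ => 1)) σ i) ↔
      ∃ B : Finset V, #B = m ∧ IsSpanningCut G B := by
  have blue_eq (σ : Fin n ⊕ Fin m ≃ V) :
      {v | Sum.elim (fun _ => (0 : Fin 2)) (fun _ => 1) (σ.symm v) = 1} =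
        σ '' Set.range Sum.inr := by
    ext v
    simp only [Set.mem_ofPred_eq, sumElim_eq_one_iff, Set.mem_image_equiv]
  simp only [forall_exposed_iff_isSpanningCut, blue_eq]
  constructor
  · rintro ⟨σ, hσ⟩
    refine ⟨(univ.map .inr).map σ.toEmbedding, by simp, ?_⟩
    simpa using hσ
  · rintro ⟨B, hB, hcut⟩
    obtain ⟨σ, hσ⟩ := exists_equiv_range_inr_eq B hB hV
    exact ⟨σ, by rwa [← Set.range_comp, hσ]⟩

end Assignments

section Construction

variable {X : Type} [Fintype X] [DecidableEq X] {H : SimpleGraph X} [DecidableRel H.Adj]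

@[simp]
theorem mkGraph_adjVC_inl_inl {x y : X} :
    (mkGraph (adjVC H)).Adj (.inl x) (.inl y) ↔ H.Adj x y := by
  simp only [mkGraph, adjVC, ne_eq, Sum.inl.injEq, decide_eq_true_eq]
  exact ⟨fun ⟨_, h⟩ => h.elim id .symm, fun h => ⟨h.ne, .inl h⟩⟩

@[simp]
theorem mkGraph_adjVC_inl_inr {x : X} {e : H.edgeFinset} :
    (mkGraph (adjVC H)).Adj (.inl x) (.inr e) ↔ x ∈ e.1 := by
  simp [mkGraph, adjVC]

theorem mkGraph_adjVC_inr {e : H.edgeFinset} {u : VVC H} :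
    (mkGraph (adjVC H)).Adj (.inr e) u ↔ ∃ x ∈ e.1, u = .inl x := by
  cases u with
  | inl x => simp [(mkGraph (adjVC H)).adj_comm (.inr e)]
  | inr f => simp [mkGraph, adjVC]

noncomputable def toVertex : VVC H → X :=
  Sum.elim id fun e => e.1.out.1

theorem IsSpanningCut.isVertexCover_image {B : Finset (VVC H)}
    (hB : IsSpanningCut (mkGraph (adjVC H)) B) : H.IsVertexCover (B.image toVertex) := by
  intro v w hvw
  let s : VVC H := .inr ⟨s(v, w), H.mem_edgeFinset.2 hvw⟩
  have of_endpoint (x : X) (hx : x ∈ s(v, w)) (hxC : x ∈ B.image toVertex) :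
      v ∈ B.image toVertex ∨ w ∈ B.image toVertex := by
    rcases Sym2.mem_iff.1 hx with rfl | rfl
    exacts [.inl hxC, .inr hxC]
  by_cases hs : s ∈ B
  · exact of_endpoint _ (Sym2.out_fst_mem _) (mem_image_of_mem _ hs)
  · obtain ⟨u, hsu, huB⟩ := hB s
    obtain ⟨x, hx, rfl⟩ := mkGraph_adjVC_inr.1 hsu
    exact of_endpoint x hx (mem_image_of_mem toVertex (huB.2 hs))

theorem isSpanningCut_map_inl (hiso : ∀ v, 0 < H.degree v) {C : Finset X}
    (hC : H.IsVertexCover C) :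
    IsSpanningCut (mkGraph (adjVC H)) (C.map .inl : Finset (VVC H)) := by
  rintro (x | ⟨⟨v, w⟩, he⟩)
  · obtain ⟨w, hxw⟩ := (H.degree_pos_iff_exists_adj x).1 (hiso x)
    by_cases hx : x ∈ C
    · exact ⟨.inr ⟨s(x, w), H.mem_edgeFinset.2 hxw⟩, by simp, by simp [hx]⟩
    · have hw : w ∈ C := (hC hxw).resolve_left hx
      exact ⟨.inl w, mkGraph_adjVC_inl_inl.2 hxw, by simp [hx, hw]⟩
  · rcases hC (H.mem_edgeFinset.1 he) with hv | hw
    · exact ⟨.inl v, mkGraph_adjVC_inr.2 ⟨v, Sym2.mem_mk_left v w, rfl⟩, by simpa using hv⟩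
    · exact ⟨.inl w, mkGraph_adjVC_inr.2 ⟨w, Sym2.mem_mk_right v w, rfl⟩, by simpa using hw⟩

end Construction

theorem all_exposed_iff_vertex_cover_general {X : Type} [Fintype X] [DecidableEq X]
    (H : SimpleGraph X) [DecidableRel H.Adj] (hiso : ∀ v : X, 0 < H.degree v)
    (lam : ℕ) (hlam : lam ≤ Fintype.card X) :
    (∃ σ : AVC H lam ≃ VVC H,
        ∀ i : AVC H lam, exposed (mkGraph (adjVC H)) (cVC H lam) σ i) ↔
    (∃ C : Finset X, C.card ≤ lam ∧ ∀ v w : X, H.Adj v w → v ∈ C ∨ w ∈ C) := by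
  have hcard : Fintype.card (VVC H) = (Fintype.card X + #H.edgeFinset - lam) + lam := by
    rw [Fintype.card_sum, Fintype.card_coe]
    omega
  refine (exists_forall_exposed_iff (mkGraph (adjVC H)) hcard).trans ⟨?_, ?_⟩
  · rintro ⟨B, hB, hcut⟩
    exact ⟨B.image toVertex, card_image_le.trans hB.le, hcut.isVertexCover_image⟩
  · rintro ⟨C, hC, hcover⟩
    obtain ⟨C', hCC', hC'⟩ := exists_superset_card_eq hC hlam
    exact ⟨C'.map .inl, by rw [card_map, hC'],
      isSpanningCut_map_inl hiso (SimpleGraph.IsVertexCover.subset (G := H) hCC' hcover)⟩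

/-- for a graph `H = (X, Y)` with no isolated vertices and a positive
integer `λ ≤ |X|`, the constructed 2-swap game with `|X| + |Y| − λ` strategic red agents
and `λ` strategic blue agents admits an assignment under which every agent is exposed
(has a neighbor of the other type) if and only if `H` has a vertex cover of size at most
`λ`. -/
theorem all_exposed_iff_vertex_cover {X : Type} [Fintype X] [DecidableEq X]
    (H : SimpleGraph X) [DecidableRel H.Adj] (hiso : ∀ v : X, 0 < H.degree v)
    (lam : ℕ) (hpos : 0 < lam) (hlam : lam ≤ Fintype.card X) :
    (∃ σ : AVC H lam ≃ VVC H,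
        ∀ i : AVC H lam, exposed (mkGraph (adjVC H)) (cVC H lam) σ i) ↔
    (∃ C : Finset X, C.card ≤ lam ∧ ∀ v w : X, H.Adj v w → v ∈ C ∨ w ∈ C) :=
  all_exposed_iff_vertex_cover_general H hiso lam hlam

end SwapGame
end
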